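/- arXiv:1106.3981 — 3 statements merged into one kernel-verified Lean document; each statement's English description precedes it below -/
import Mathlib

section
/- Let ℓ ≥ 1 be an integer and assume X_{ℓ-1}⁺ = S (i.e., the group trellis is ℓ-controllable). Then for every 0 ≤ j ≤ ℓ the set product (X₀ ∩ Y_ℓ)(X₁ ∩ Y_{ℓ-1})⋯(X_j ∩ Y_{ℓ-j}) equals X_j; in particular X_{j-1}(X_j ∩ Y_{ℓ-j}) = X_j for every 0 ≤ j ≤ ℓ, so the Schreier matrix of {X_j} and {Y_k} is ℓ-controllable. -/
open Pointwise

namespace GroupCodes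

variable {S : Type*} [Group S]

/-- The subgroups `Xₙ` of the branch group `B ≤ S × S`: `X₀ = {b ∈ B : b⁻ = 1}` and
`X_{n+1} = {b ∈ B : b⁻ ∈ Xₙ⁺}` (here `b⁻ = b.1`, `b⁺ = b.2`, `U⁺ = snd '' U`). -/
def Xnat (B : Subgroup (S × S)) : ℕ → Subgroup (S × S)
  | 0 => B ⊓ (MonoidHom.fst S S).ker
  | n + 1 => B ⊓ (Subgroup.map (MonoidHom.snd S S) (Xnat B n)).comap (MonoidHom.fst S S)

/-- The subgroups `Yₙ` of the branch group `B ≤ S × S`: `Y₀ = {b ∈ B : b⁺ = 1}` and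
`Y_{n+1} = {b ∈ B : b⁺ ∈ Yₙ⁻}`. -/
def Ynat (B : Subgroup (S × S)) : ℕ → Subgroup (S × S)
  | 0 => B ⊓ (MonoidHom.snd S S).ker
  | n + 1 => B ⊓ (Subgroup.map (MonoidHom.fst S S) (Ynat B n)).comap (MonoidHom.snd S S)

/-- `X i` for an integer index `i`, trivial for `i < 0`. -/
def X (B : Subgroup (S × S)) (i : ℤ) : Subgroup (S × S) :=
  if i < 0 then ⊥ else Xnat B i.toNat

/-- `Y i` for an integer index `i`, trivial for `i < 0`. -/
def Y (B : Subgroup (S × S)) (i : ℤ) : Subgroup (S × S) :=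
  if i < 0 then ⊥ else Ynat B i.toNat

/-- The next-branch set `N(U) = {b ∈ B : b⁻ ∈ U⁺}`. -/
def N (B U : Subgroup (S × S)) : Subgroup (S × S) :=
  B ⊓ (Subgroup.map (MonoidHom.snd S S) U).comap (MonoidHom.fst S S)

/-- The previous-branch set `P(U) = {b ∈ B : b⁺ ∈ U⁻}`. -/
def P (B U : Subgroup (S × S)) : Subgroup (S × S) :=
  B ⊓ (Subgroup.map (MonoidHom.fst S S) U).comap (MonoidHom.snd S S)

/-- `IsQuotIso J H J' H'` says that `J` (viewed inside `H`) is normal in `H`, `J'` is normal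
in `H'`, and there is a group isomorphism `H / J ≅ H' / J'`. -/
def IsQuotIso {G₁ G₂ : Type*} [Group G₁] [Group G₂]
    (J H : Subgroup G₁) (J' H' : Subgroup G₂) : Prop :=
  (J.subgroupOf H).Normal ∧ (J'.subgroupOf H').Normal ∧
    ∀ [(J.subgroupOf H).Normal] [(J'.subgroupOf H').Normal],
      Nonempty ((H ⧸ J.subgroupOf H) ≃* (H' ⧸ J'.subgroupOf H'))

/-- `T` is a right transversal of `J` inside `H`: `T ⊆ H` and `T` meets every right coset
of `J` contained in `H` in exactly one element. -/
def IsRightTransversalIn {G : Type*} [Group G] (J H : Subgroup G) (T : Set G) : Prop :=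
  T ⊆ (H : Set G) ∧ ∀ h ∈ H, ∃! t, t ∈ T ∧ t * h⁻¹ ∈ J

/-- The group of trellis path segments `(b₀, …, bₙ)` with `b_j ∈ F j` and matching states
`b_j⁺ = b_{j+1}⁻`; a subgroup of the direct product `(S × S)^{n+1}`. -/
def chainSubgroup (n : ℕ) (F : ℤ → Subgroup (S × S)) : Subgroup (Fin (n + 1) → S × S) where
  carrier := {b | (∀ i : Fin (n + 1), b i ∈ F (i : ℤ)) ∧
    ∀ i : Fin n, (b i.castSucc).2 = (b i.succ).1}
  one_mem' := ⟨fun _ => one_mem _, fun _ => rfl⟩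
  mul_mem' := by
    rintro a b ⟨ha1, ha2⟩ ⟨hb1, hb2⟩
    refine ⟨fun i => mul_mem (ha1 i) (hb1 i), fun i => ?_⟩
    simp only [Pi.mul_apply, Prod.snd_mul, Prod.fst_mul, ha2 i, hb2 i]
  inv_mem' := by
    rintro a ⟨ha1, ha2⟩
    refine ⟨fun i => inv_mem (ha1 i), fun i => ?_⟩
    simp only [Pi.inv_apply, Prod.snd_inv, Prod.fst_inv, ha2 i]

/-- `U ⨝ N(U)`: the group of trellis path segments `(b, b')` of length two with `b ∈ U`,
`b' ∈ N(U)` and `b⁺ = b'⁻`; a subgroup of the direct product `(S × S) × (S × S)`. -/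
def JoinN (B U : Subgroup (S × S)) : Subgroup ((S × S) × (S × S)) where
  carrier := {p | p.1 ∈ U ∧ p.2 ∈ N B U ∧ p.1.2 = p.2.1}
  one_mem' := ⟨one_mem _, one_mem _, rfl⟩
  mul_mem' := by
    rintro a b ⟨ha1, ha2, ha3⟩ ⟨hb1, hb2, hb3⟩
    exact ⟨mul_mem ha1 hb1, mul_mem ha2 hb2, by
      simp only [Prod.fst_mul, Prod.snd_mul, ha3, hb3]⟩
  inv_mem' := by
    rintro a ⟨ha1, ha2, ha3⟩
    exact ⟨inv_mem ha1, inv_mem ha2, by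
      simp only [Prod.fst_inv, Prod.snd_inv, ha3]⟩

/-!
Read `B` as a relation on states and let `pathRel B n` relate `s` to `t` when some trellis path
of `n` branches leads from `s` to `t`. Then `Xₙ = {b ∈ B : (1, b⁻) ∈ pathRel B n}` and
`Yₙ = {b ∈ B : (b⁺, 1) ∈ pathRel B n}`, and `ℓ`-controllability says that `pathRel B ℓ` is
everything. Splitting paths of length `ℓ = j + (ℓ - j)` at their `j`-th state writes every state
as `x * y` with `(1, x) ∈ pathRel B j` and `(y, 1) ∈ pathRel B (ℓ - j)`. Applied to the left state
of `b ∈ X_{j+1}` this yields `c ∈ X_{j+1} ∩ Y_{ℓ-1-j}` with `b * c⁻¹ ∈ X_j`, i.e.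
`X_{j+1} = X_j (X_{j+1} ∩ Y_{ℓ-1-j})`, and the product formula follows by induction on `j`.
-/

section relComp

variable {G H K L : Type*} [Group G] [Group H] [Group K] [Group L]

def relComp (A : Subgroup (G × H)) (C : Subgroup (H × K)) : Subgroup (G × K) where
  carrier := {p | ∃ u, (p.1, u) ∈ A ∧ (u, p.2) ∈ C}
  one_mem' := ⟨1, one_mem A, one_mem C⟩
  mul_mem' := by
    rintro _ _ ⟨u, hAu, huC⟩ ⟨v, hAv, hvC⟩
    exact ⟨u * v, mul_mem hAu hAv, mul_mem huC hvC⟩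
  inv_mem' := by
    rintro _ ⟨u, hAu, huC⟩
    exact ⟨u⁻¹, inv_mem hAu, inv_mem huC⟩

@[simp]
lemma mem_relComp {A : Subgroup (G × H)} {C : Subgroup (H × K)} {p : G × K} :
    p ∈ relComp A C ↔ ∃ u, (p.1, u) ∈ A ∧ (u, p.2) ∈ C :=
  Iff.rfl

lemma relComp_assoc (A : Subgroup (G × H)) (C : Subgroup (H × K)) (D : Subgroup (K × L)) :
    relComp (relComp A C) D = relComp A (relComp C D) := by
  ext p
  constructor
  · rintro ⟨u, ⟨v, hv, hvu⟩, hu⟩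
    exact ⟨v, hv, u, hvu, hu⟩
  · rintro ⟨v, hv, u, hvu, hu⟩
    exact ⟨u, ⟨v, hv, hvu⟩, hu⟩

lemma graph_id_relComp (A : Subgroup (G × H)) : relComp (MonoidHom.id G).graph A = A := by
  ext p
  simp [MonoidHom.mem_graph]

lemma relComp_graph_id (A : Subgroup (G × H)) : relComp A (MonoidHom.id H).graph = A := by
  ext p
  simp [MonoidHom.mem_graph]

end relComp

def pathRel (B : Subgroup (S × S)) : ℕ → Subgroup (S × S)
  | 0 => (MonoidHom.id S).graph
  | n + 1 => relComp (pathRel B n) B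

section pathRel

variable {B : Subgroup (S × S)}

lemma relComp_pathRel (B : Subgroup (S × S)) (m n : ℕ) :
    relComp (pathRel B m) (pathRel B n) = pathRel B (m + n) := by
  induction n with
  | zero => exact relComp_graph_id _
  | succ n ih => rw [pathRel, ← relComp_assoc, ih, ← add_assoc, pathRel]

lemma pathRel_succ' (B : Subgroup (S × S)) (n : ℕ) :
    pathRel B (n + 1) = relComp B (pathRel B n) := by
  rw [add_comm, ← relComp_pathRel]
  exact congrArg (relComp · _) (graph_id_relComp B)

lemma exists_mem_pathRel_of_map_fst_eq_top (hB : B.map (MonoidHom.fst S S) = ⊤) (n : ℕ)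
    (s : S) : ∃ t, (s, t) ∈ pathRel B n := by
  induction n with
  | zero => exact ⟨s, rfl⟩
  | succ n ih =>
    obtain ⟨u, hu⟩ := ih
    obtain ⟨⟨u', t⟩, hb, rfl⟩ := hB.ge (Subgroup.mem_top u)
    exact ⟨t, u', hu, hb⟩

lemma exists_mem_pathRel_of_map_snd_eq_top (hB : B.map (MonoidHom.snd S S) = ⊤) (n : ℕ)
    (t : S) : ∃ s, (s, t) ∈ pathRel B n := by
  induction n generalizing t with
  | zero => exact ⟨t, rfl⟩
  | succ n ih =>
    obtain ⟨⟨u, t'⟩, hb, rfl⟩ := hB.ge (Subgroup.mem_top t)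
    obtain ⟨s, hs⟩ := ih u
    exact ⟨s, u, hs, hb⟩

lemma pathRel_eq_top (hB : B.map (MonoidHom.fst S S) = ⊤) {n : ℕ}
    (h : ∀ t, ((1 : S), t) ∈ pathRel B n) : pathRel B n = ⊤ := by
  refine eq_top_iff.2 fun ⟨s, t⟩ _ ↦ ?_
  obtain ⟨u, hu⟩ := exists_mem_pathRel_of_map_fst_eq_top hB n s
  simpa using mul_mem hu (h (u⁻¹ * t))

lemma exists_mul_eq_of_pathRel_add_eq_top (hB : B.map (MonoidHom.snd S S) = ⊤) {a b : ℕ}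
    (h : pathRel B (a + b) = ⊤) (s : S) :
    ∃ x y, ((1 : S), x) ∈ pathRel B a ∧ (y, (1 : S)) ∈ pathRel B b ∧ x * y = s := by
  obtain ⟨z, hz⟩ := exists_mem_pathRel_of_map_snd_eq_top hB a s⁻¹
  -- split a path from `z` to `1` at its `a`-th state `u`, then translate its first part by a
  -- path from `z` to `s⁻¹`
  obtain ⟨u, hzu, hu⟩ : (z, (1 : S)) ∈ relComp (pathRel B a) (pathRel B b) := by
    rw [relComp_pathRel, h]
    exact Subgroup.mem_top _
  exact ⟨s * u, u⁻¹, by simpa using mul_mem (inv_mem hz) hzu, by simpa using inv_mem hu,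
    by group⟩

end pathRel

lemma mem_map_snd_iff {B R U : Subgroup (S × S)}
    (hU : ∀ b, b ∈ U ↔ b ∈ B ∧ ((1 : S), b.1) ∈ R) {t : S} :
    t ∈ U.map (MonoidHom.snd S S) ↔ ((1 : S), t) ∈ relComp R B := by
  simp only [Subgroup.mem_map, hU, mem_relComp]
  constructor
  · rintro ⟨⟨u, t⟩, ⟨hb, hR⟩, rfl⟩
    exact ⟨u, hR, hb⟩
  · rintro ⟨u, hR, hb⟩
    exact ⟨(u, t), ⟨hb, hR⟩, rfl⟩

lemma mem_map_fst_iff {B R U : Subgroup (S × S)}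
    (hU : ∀ b, b ∈ U ↔ b ∈ B ∧ (b.2, (1 : S)) ∈ R) {s : S} :
    s ∈ U.map (MonoidHom.fst S S) ↔ (s, (1 : S)) ∈ relComp B R := by
  simp only [Subgroup.mem_map, hU, mem_relComp]
  constructor
  · rintro ⟨⟨s, u⟩, ⟨hb, hR⟩, rfl⟩
    exact ⟨u, hb, hR⟩
  · rintro ⟨u, hb, hR⟩
    exact ⟨(s, u), ⟨hb, hR⟩, rfl⟩

section XY

variable {B : Subgroup (S × S)}

lemma mem_Xnat_iff {n : ℕ} {b : S × S} :
    b ∈ Xnat B n ↔ b ∈ B ∧ ((1 : S), b.1) ∈ pathRel B n := by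
  induction n generalizing b with
  | zero =>
    simp only [Xnat, pathRel, Subgroup.mem_inf, MonoidHom.mem_ker, MonoidHom.mem_graph,
      MonoidHom.id_apply, MonoidHom.coe_fst, eq_comm]
  | succ n ih =>
    rw [Xnat, Subgroup.mem_inf, Subgroup.mem_comap, mem_map_snd_iff fun _ ↦ ih]
    rfl

lemma mem_Ynat_iff {n : ℕ} {b : S × S} :
    b ∈ Ynat B n ↔ b ∈ B ∧ (b.2, (1 : S)) ∈ pathRel B n := by
  induction n generalizing b with
  | zero =>
    simp only [Ynat, pathRel, Subgroup.mem_inf, MonoidHom.mem_ker, MonoidHom.mem_graph,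
      MonoidHom.id_apply, MonoidHom.coe_snd]
  | succ n ih =>
    rw [Ynat, Subgroup.mem_inf, Subgroup.mem_comap, mem_map_fst_iff fun _ ↦ ih, pathRel_succ']
    rfl

lemma mem_map_snd_Xnat_iff {n : ℕ} {t : S} :
    t ∈ (Xnat B n).map (MonoidHom.snd S S) ↔ ((1 : S), t) ∈ pathRel B (n + 1) :=
  mem_map_snd_iff fun _ ↦ mem_Xnat_iff

lemma mem_map_fst_Ynat_iff {n : ℕ} {s : S} :
    s ∈ (Ynat B n).map (MonoidHom.fst S S) ↔ (s, (1 : S)) ∈ pathRel B (n + 1) := by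
  rw [pathRel_succ']
  exact mem_map_fst_iff fun _ ↦ mem_Ynat_iff

lemma Xnat_le (n : ℕ) : Xnat B n ≤ B := fun _ hb ↦ (mem_Xnat_iff.1 hb).1

lemma Ynat_le (n : ℕ) : Ynat B n ≤ B := fun _ hb ↦ (mem_Ynat_iff.1 hb).1

lemma Xnat_le_succ (n : ℕ) : Xnat B n ≤ Xnat B (n + 1) := by
  intro b hb
  obtain ⟨hbB, hR⟩ := mem_Xnat_iff.1 hb
  rw [mem_Xnat_iff, pathRel_succ']
  exact ⟨hbB, 1, one_mem B, hR⟩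

lemma Ynat_eq_of_pathRel_eq_top {n : ℕ} (h : pathRel B n = ⊤) : Ynat B n = B := by
  ext b
  simp [mem_Ynat_iff, h]

variable {m : ℕ}

lemma coe_Xnat_succ (hB : B.map (MonoidHom.snd S S) = ⊤) (hW : pathRel B (m + 1) = ⊤)
    {j : ℕ} (hj : j ≤ m) :
    (Xnat B (j + 1) : Set (S × S)) = Xnat B j * ↑(Xnat B (j + 1) ⊓ Ynat B (m - j)) := by
  refine subset_antisymm (fun b hb ↦ ?_) ?_
  · obtain ⟨hbB, -⟩ := mem_Xnat_iff.1 hb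
    obtain ⟨x, y, hx, hy, hxy⟩ := exists_mul_eq_of_pathRel_add_eq_top hB (a := j)
      (b := m - j + 1) (by rwa [← add_assoc, Nat.add_sub_cancel' hj]) b.1
    obtain ⟨c, hc, rfl⟩ := mem_map_fst_Ynat_iff.2 hy
    have hbc : b * c⁻¹ ∈ Xnat B j :=
      mem_Xnat_iff.2 ⟨mul_mem hbB (inv_mem (Ynat_le _ hc)), by simpa [← hxy] using hx⟩
    refine ⟨b * c⁻¹, hbc, c, ⟨?_, hc⟩, by group⟩
    simpa using mul_mem (inv_mem (Xnat_le_succ j hbc)) hb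
  · rintro _ ⟨a, ha, c, hc, rfl⟩
    exact mul_mem (Xnat_le_succ j ha) hc.1

lemma prod_Xnat_inf_Ynat (hB : B.map (MonoidHom.snd S S) = ⊤) (hW : pathRel B (m + 1) = ⊤) :
    ∀ j ≤ m + 1, ((List.range (j + 1)).map
      fun i ↦ ((Xnat B i ⊓ Ynat B (m + 1 - i) : Subgroup (S × S)) : Set (S × S))).prod =
        Xnat B j
  | 0, _ => by simp [Ynat_eq_of_pathRel_eq_top hW, Xnat_le]
  | j + 1, hj => by
    rw [List.range_succ, List.map_append, List.prod_append, prod_Xnat_inf_Ynat hB hW j (by omega),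
      List.map_singleton, List.prod_singleton, Nat.add_sub_add_right, coe_Xnat_succ hB hW (by omega)]

end XY

lemma sup_eq_of_coe_eq_mul {G : Type*} [Group G] {H K L : Subgroup G}
    (h : (L : Set G) = H * K) : H ⊔ K = L := by
  rw [Subgroup.sup_eq_closure_mul, ← h, Subgroup.closure_eq]

lemma X_natCast (B : Subgroup (S × S)) (n : ℕ) : X B n = Xnat B n := by
  simp [X]

lemma Y_natCast (B : Subgroup (S × S)) (n : ℕ) : Y B n = Ynat B n := by
  simp [Y]

/-- if the trellis is `ℓ`-controllable, then
`(X₀ ∩ Y_ℓ)(X₁ ∩ Y_{ℓ-1})⋯(X_j ∩ Y_{ℓ-j}) = X_j` (a pointwise product of sets), and in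
particular `X_{j-1}(X_j ∩ Y_{ℓ-j}) = X_j`, for `0 ≤ j ≤ ℓ`. -/
theorem controllable_implies_schreier_controllable
    (B : Subgroup (S × S))
    (hB1 : Subgroup.map (MonoidHom.fst S S) B = ⊤)
    (hB2 : Subgroup.map (MonoidHom.snd S S) B = ⊤)
    (ℓ : ℤ) (hℓ : 1 ≤ ℓ)
    (hctl : Subgroup.map (MonoidHom.snd S S) (X B (ℓ - 1)) = ⊤) :
    ∀ j : ℤ, 0 ≤ j → j ≤ ℓ →
      ((List.range (j.toNat + 1)).map
          (fun i : ℕ => ((X B i ⊓ Y B (ℓ - i)) : Set (S × S)))).prod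
        = (X B j : Set (S × S)) ∧
      X B (j - 1) ⊔ (X B j ⊓ Y B (ℓ - j)) = X B j := by
  intro j hj hjℓ
  lift j to ℕ using hj
  obtain ⟨m, rfl⟩ : ∃ m : ℕ, ℓ = m + 1 := ⟨(ℓ - 1).toNat, by omega⟩
  have hY : ∀ i ≤ m + 1, Y B (m + 1 - i) = Ynat B (m + 1 - i) := fun i hi ↦ by
    rw [← Y_natCast]; push_cast [hi]; rfl
  rw [add_sub_cancel_right, X_natCast] at hctl
  have hW : pathRel B (m + 1) = ⊤ :=
    pathRel_eq_top hB1 fun t ↦ mem_map_snd_Xnat_iff.1 (hctl ▸ Subgroup.mem_top t)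
  refine ⟨?_, ?_⟩
  · rw [Int.toNat_natCast, X_natCast, ← prod_Xnat_inf_Ynat hB2 hW j (by omega)]
    refine congrArg List.prod (List.map_congr_left fun i hi ↦ ?_)
    rw [X_natCast, hY i (by simp at hi; omega)]
    exact (Subgroup.coe_inf _ _).symm
  · rw [hY j (by omega), X_natCast]
    rcases j with _ | j
    · simp [X, Ynat_eq_of_pathRel_eq_top hW, Xnat_le]
    · rw [Nat.cast_succ, add_sub_cancel_right, X_natCast, Nat.add_sub_add_right]
      exact sup_eq_of_coe_eq_mul (coe_Xnat_succ hB2 hW (by omega))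

end GroupCodes
end

section
/- Let l ≥ 1 be an integer. The following are equivalent: (a) for every pair (s, s') ∈ S × S there exists a trellis path c with (c 0)⁻ = s and (c l)⁻ = s' (i.e., the group trellis is l-controllable); (b) X_{l-1}⁺ = S; (c) Y_{l-1}⁻ = S. -/
open Pointwise

namespace GroupCodes

variable {S : Type*} [Group S]

section ControllabilityAux

variable {B : Subgroup (S × S)}

lemma mem_Xnat_zero {b : S × S} : b ∈ Xnat B 0 ↔ b ∈ B ∧ b.1 = 1 := by
  show b ∈ B ⊓ (MonoidHom.fst S S).ker ↔ _
  rw [Subgroup.mem_inf, MonoidHom.mem_ker]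
  rfl

lemma mem_Xnat_succ {n : ℕ} {b : S × S} :
    b ∈ Xnat B (n + 1) ↔ b ∈ B ∧ ∃ a ∈ Xnat B n, a.2 = b.1 := by
  simp [Xnat, Subgroup.mem_inf, Subgroup.mem_comap, Subgroup.mem_map]

lemma mem_Ynat_zero {b : S × S} : b ∈ Ynat B 0 ↔ b ∈ B ∧ b.2 = 1 := by
  show b ∈ B ⊓ (MonoidHom.snd S S).ker ↔ _
  rw [Subgroup.mem_inf, MonoidHom.mem_ker]
  rfl

lemma mem_Ynat_succ {n : ℕ} {b : S × S} :
    b ∈ Ynat B (n + 1) ↔ b ∈ B ∧ ∃ a ∈ Ynat B n, a.1 = b.2 := by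
  simp [Ynat, Subgroup.mem_inf, Subgroup.mem_comap, Subgroup.mem_map]

lemma exists_fst (hB1 : Subgroup.map (MonoidHom.fst S S) B = ⊤) (s : S) :
    ∃ b ∈ B, b.1 = s := by
  have : s ∈ Subgroup.map (MonoidHom.fst S S) B := hB1 ▸ Subgroup.mem_top s
  simpa [Subgroup.mem_map] using this

lemma exists_snd (hB2 : Subgroup.map (MonoidHom.snd S S) B = ⊤) (s : S) :
    ∃ b ∈ B, b.2 = s := by
  have : s ∈ Subgroup.map (MonoidHom.snd S S) B := hB2 ▸ Subgroup.mem_top s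
  simpa [Subgroup.mem_map] using this

/-- A path starting at state `1` stays in the `Xnat` filtration. -/
lemma path_mem_Xnat {c : ℤ → S × S}
    (hcB : ∀ t, c t ∈ B) (hm : ∀ t, (c t).2 = (c (t + 1)).1) (h0 : (c 0).1 = 1) :
    ∀ k : ℕ, c (k : ℤ) ∈ Xnat B k := by
  intro k
  induction k with
  | zero => exact mem_Xnat_zero.mpr ⟨hcB 0, h0⟩
  | succ k ih =>
      refine mem_Xnat_succ.mpr ⟨hcB _, c (k : ℤ), ih, ?_⟩
      have := hm (k : ℤ)
      rw [this]; norm_num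

/-- From membership in `Xnat B n` extract a finite chain from state `1`. -/
lemma Xnat_chain : ∀ n : ℕ, ∀ b ∈ Xnat B n, ∃ d : ℕ → S × S,
    (∀ k, k ≤ n → d k ∈ B) ∧ (d 0).1 = 1 ∧
    (∀ k, k < n → (d k).2 = (d (k + 1)).1) ∧ d n = b := by
  intro n
  induction n with
  | zero =>
      intro b hb
      obtain ⟨hbB, hb1⟩ := mem_Xnat_zero.mp hb
      exact ⟨fun _ => b, fun _ _ => hbB, hb1, fun k hk => absurd hk (by omega), rfl⟩
  | succ n ih =>
      intro b hb
      obtain ⟨hbB, a, haX, ha2⟩ := mem_Xnat_succ.mp hb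
      obtain ⟨d, hdB, hd0, hdm, hdn⟩ := ih a haX
      refine ⟨fun k => if k = n + 1 then b else d k, ?_, ?_, ?_, ?_⟩
      · intro k hk
        dsimp only
        by_cases h : k = n + 1
        · rw [if_pos h]; exact hbB
        · rw [if_neg h]; exact hdB k (by omega)
      · dsimp only
        rw [if_neg (by omega)]; exact hd0
      · intro k hk
        dsimp only
        rcases Nat.lt_succ_iff_lt_or_eq.mp hk with h | h
        · rw [if_neg (by omega), if_neg (by omega)]; exact hdm k h
        · subst h; rw [if_neg (by omega), if_pos rfl, hdn, ha2]
      · dsimp only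
        rw [if_pos rfl]

/-- Bi-infinite path through an arbitrary state at time 0. -/
lemma exists_path_through (hB1 : Subgroup.map (MonoidHom.fst S S) B = ⊤)
    (hB2 : Subgroup.map (MonoidHom.snd S S) B = ⊤) (s : S) :
    ∃ c : ℤ → S × S, (∀ t, c t ∈ B) ∧ (∀ t, (c t).2 = (c (t + 1)).1) ∧ (c 0).1 = s := by
  choose f hfB hf1 using exists_fst hB1
  choose g hgB hg2 using exists_snd hB2
  set F : ℕ → S × S := fun k => Nat.rec (f s) (fun _ p => f p.2) k with hF
  set G : ℕ → S × S := fun k => Nat.rec (f s) (fun _ p => g p.1) k with hG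
  have hFB : ∀ k, F k ∈ B := by intro k; cases k <;> [exact hfB s; exact hfB _]
  have hGB : ∀ k, G k ∈ B := by intro k; cases k <;> [exact hfB s; exact hgB _]
  have hFstep : ∀ k, F (k + 1) = f (F k).2 := fun _ => rfl
  have hGstep : ∀ k, G (k + 1) = g (G k).1 := fun _ => rfl
  refine ⟨fun t => if 0 ≤ t then F t.toNat else G (-t).toNat, fun t => ?_, fun t => ?_, ?_⟩
  · dsimp only
    split <;> [exact hFB _; exact hGB _]
  · rcases le_or_gt 0 t with ht | ht
    · have h1 : (0 : ℤ) ≤ t + 1 := by omega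
      have h2 : (t + 1).toNat = t.toNat + 1 := by omega
      simp only [if_pos ht, if_pos h1, h2]
      rw [hFstep, hf1]
    · have h2 : (-t).toNat = (-(t+1)).toNat + 1 := by omega
      simp only [if_neg (not_le.mpr ht), h2]
      rw [hGstep, hg2]
      rcases le_or_gt 0 (t + 1) with h1 | h1
      · have e1 : (-(t+1)).toNat = 0 := by omega
        have e2 : (t + 1).toNat = 0 := by omega
        rw [if_pos h1, e1, e2]
        rfl
      · rw [if_neg (not_le.mpr h1)]
  · simp only [if_pos le_rfl]
    exact hf1 s

/-- Path from state `1` at time 0 to state `x` at time `n + 1`, assuming `Xₙ⁺ = S`. -/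
lemma exists_path_from_one (hB1 : Subgroup.map (MonoidHom.fst S S) B = ⊤) {n : ℕ}
    (hX : Subgroup.map (MonoidHom.snd S S) (Xnat B n) = ⊤) (x : S) :
    ∃ c : ℤ → S × S, (∀ t, c t ∈ B) ∧ (∀ t, (c t).2 = (c (t + 1)).1) ∧
      (c 0).1 = 1 ∧ (c ((n : ℤ) + 1)).1 = x := by
  have hx : x ∈ Subgroup.map (MonoidHom.snd S S) (Xnat B n) := hX ▸ Subgroup.mem_top x
  obtain ⟨b, hbX, hb2⟩ := Subgroup.mem_map.mp hx
  obtain ⟨d, hdB, hd0, hdm, hdn⟩ := Xnat_chain n b hbX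
  choose f hfB hf1 using exists_fst hB1
  set D : ℕ → S × S :=
    fun k => Nat.rec (d 0) (fun k p => if k + 1 ≤ n then d (k + 1) else f p.2) k with hD
  have hDd : ∀ k, k ≤ n → D k = d k := by
    intro k
    induction k with
    | zero => intro _; rfl
    | succ k _ => intro hk; show (if k + 1 ≤ n then d (k+1) else _) = _; rw [if_pos hk]
  have hDB : ∀ k, D k ∈ B := by
    intro k
    induction k with
    | zero => exact hdB 0 (Nat.zero_le n)
    | succ k _ =>
        show (if k + 1 ≤ n then d (k+1) else f (D k).2) ∈ B
        split <;> [exact hdB _ ‹_›; exact hfB _]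
  have hDm : ∀ k, (D k).2 = (D (k + 1)).1 := by
    intro k
    show (D k).2 = (if k + 1 ≤ n then d (k+1) else f (D k).2).1
    split
    · rw [hDd k (by omega)]; exact hdm k (by omega)
    · rw [hf1]
  have hDn1 : (D (n + 1)).1 = x := by
    show (if n + 1 ≤ n then d (n+1) else f (D n).2).1 = x
    rw [if_neg (by omega), hf1, hDd n le_rfl, hdn]
    exact hb2
  refine ⟨fun t => if t < 0 then 1 else D t.toNat, fun t => ?_, fun t => ?_, ?_, ?_⟩
  · dsimp only
    split <;> [exact one_mem B; exact hDB _]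
  · rcases lt_or_ge t 0 with ht | ht
    · rcases lt_or_ge (t + 1) 0 with h1 | h1
      · simp only [if_pos ht, if_pos h1]; rfl
      · have h0 : (t + 1).toNat = 0 := by omega
        simp only [if_pos ht, if_neg (not_lt.mpr h1), h0]
        show (1 : S) = (d 0).1
        rw [hd0]
    · have h1 : ¬ t + 1 < 0 := by omega
      have h2 : (t + 1).toNat = t.toNat + 1 := by omega
      simp only [if_neg (not_lt.mpr ht), if_neg h1, h2]
      exact hDm t.toNat
  · simp only [if_neg (lt_irrefl 0)]
    show (d 0).1 = 1
    exact hd0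
  · have h1 : ¬ (n : ℤ) + 1 < 0 := by omega
    have h2 : ((n : ℤ) + 1).toNat = n + 1 := by omega
    simp only [if_neg h1, h2, hDn1]

/-- `(n+1)`-controllability statement. -/
def Ctrl (B : Subgroup (S × S)) (n : ℕ) : Prop :=
  ∀ s s' : S, ∃ c : ℤ → S × S,
    (∀ t : ℤ, c t ∈ B) ∧ (∀ t : ℤ, (c t).2 = (c (t + 1)).1) ∧
    (c 0).1 = s ∧ (c ((n : ℤ) + 1)).1 = s'

/-- Main equivalence: `(n+1)`-controllability iff `Xₙ⁺ = S`. -/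
lemma ctrl_iff (hB1 : Subgroup.map (MonoidHom.fst S S) B = ⊤)
    (hB2 : Subgroup.map (MonoidHom.snd S S) B = ⊤) (n : ℕ) :
    Ctrl B n ↔ Subgroup.map (MonoidHom.snd S S) (Xnat B n) = ⊤ := by
  constructor
  · intro h
    rw [Subgroup.eq_top_iff']
    intro x
    obtain ⟨c, hcB, hm, h0, hl⟩ := h 1 x
    refine Subgroup.mem_map.mpr ⟨c (n : ℤ), path_mem_Xnat hcB hm h0 n, ?_⟩
    show (c (n : ℤ)).2 = x
    rw [hm (n : ℤ), hl]
  · intro h s s'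
    obtain ⟨q, hqB, hqm, hq0⟩ := exists_path_through hB1 hB2 s
    obtain ⟨p, hpB, hpm, hp0, hpl⟩ :=
      exists_path_from_one hB1 h ((q ((n : ℤ) + 1)).1⁻¹ * s')
    refine ⟨fun t => q t * p t, fun t => mul_mem (hqB t) (hpB t), fun t => ?_, ?_, ?_⟩
    · simp only [Prod.snd_mul, Prod.fst_mul, hqm t, hpm t]
    · simp only [Prod.fst_mul, hq0, hp0, mul_one]
    · simp only [Prod.fst_mul, hpl, mul_inv_cancel_left]

/-- The coordinate-swapping homomorphism. -/
def sw : S × S →* S × S := (MonoidHom.snd S S).prod (MonoidHom.fst S S)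

lemma sw_sw (b : S × S) : sw (sw b) = b := rfl

lemma mem_map_sw {b : S × S} : b ∈ Subgroup.map (sw (S := S)) B ↔ sw b ∈ B := by
  constructor
  · rintro ⟨a, haB, rfl⟩; rwa [sw_sw]
  · intro h; exact ⟨sw b, h, sw_sw b⟩

lemma map_sw_map_sw : Subgroup.map (sw (S := S)) (Subgroup.map sw B) = B := by
  rw [Subgroup.map_map]
  have : (sw (S := S)).comp sw = MonoidHom.id _ := by ext b <;> rfl
  rw [this, Subgroup.map_id]

lemma mem_Ynat_iff_sw : ∀ n : ℕ, ∀ b : S × S,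
    b ∈ Ynat B n ↔ sw b ∈ Xnat (Subgroup.map sw B) n := by
  intro n
  induction n with
  | zero =>
      intro b
      rw [mem_Ynat_zero, mem_Xnat_zero, mem_map_sw, sw_sw]
      rfl
  | succ n ih =>
      intro b
      rw [mem_Ynat_succ, mem_Xnat_succ, mem_map_sw, sw_sw]
      constructor
      · rintro ⟨hbB, a, haY, ha1⟩
        exact ⟨hbB, sw a, (ih a).mp haY, ha1⟩
      · rintro ⟨hbB, a', ha'X, ha'2⟩
        refine ⟨hbB, sw a', (ih (sw a')).mpr ?_, ha'2⟩
        rwa [sw_sw]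

lemma map_fst_Ynat_eq (n : ℕ) :
    Subgroup.map (MonoidHom.fst S S) (Ynat B n) =
      Subgroup.map (MonoidHom.snd S S) (Xnat (Subgroup.map sw B) n) := by
  ext s
  simp only [Subgroup.mem_map]
  constructor
  · rintro ⟨b, hb, rfl⟩
    exact ⟨sw b, (mem_Ynat_iff_sw n b).mp hb, rfl⟩
  · rintro ⟨b', hb', rfl⟩
    refine ⟨sw b', (mem_Ynat_iff_sw n (sw b')).mpr ?_, rfl⟩
    rwa [sw_sw]

lemma ctrl_swap (n : ℕ) (h : Ctrl B n) : Ctrl (Subgroup.map sw B) n := by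
  intro s s'
  obtain ⟨c, hcB, hm, h0, hl⟩ := h s' s
  refine ⟨fun t => sw (c ((n : ℤ) - t)), fun t => ⟨c ((n : ℤ) - t), hcB _, rfl⟩,
    fun t => ?_, ?_, ?_⟩
  · show (c ((n : ℤ) - t)).1 = (c ((n : ℤ) - (t + 1))).2
    have := hm ((n : ℤ) - (t + 1))
    rw [this]
    ring_nf
  · show (c ((n : ℤ) - 0)).2 = s
    rw [hm ((n : ℤ) - 0)]
    have e : (n : ℤ) - 0 + 1 = (n : ℤ) + 1 := by ring
    rw [e]
    exact hl
  · show (c ((n : ℤ) - ((n : ℤ) + 1))).2 = s'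
    have heq : (n : ℤ) - ((n : ℤ) + 1) = -1 := by ring
    rw [heq, hm (-1)]
    norm_num [h0]

lemma map_fst_map_sw : Subgroup.map (MonoidHom.fst S S) (Subgroup.map (sw (S := S)) B) =
    Subgroup.map (MonoidHom.snd S S) B := by
  rw [Subgroup.map_map]; rfl

lemma map_snd_map_sw : Subgroup.map (MonoidHom.snd S S) (Subgroup.map (sw (S := S)) B) =
    Subgroup.map (MonoidHom.fst S S) B := by
  rw [Subgroup.map_map]; rfl

end ControllabilityAux

/-- `l`-controllability of the group trellis (any pair of states joined by a
path in `l` steps) is equivalent to `X_{l-1}⁺ = S` and to `Y_{l-1}⁻ = S`. -/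
theorem controllability_characterization
    (B : Subgroup (S × S))
    (hB1 : Subgroup.map (MonoidHom.fst S S) B = ⊤)
    (hB2 : Subgroup.map (MonoidHom.snd S S) B = ⊤)
    (l : ℤ) (hl : 1 ≤ l) :
    ((∀ s s' : S, ∃ c : ℤ → S × S,
        (∀ t : ℤ, c t ∈ B) ∧ (∀ t : ℤ, (c t).2 = (c (t + 1)).1) ∧
        (c 0).1 = s ∧ (c l).1 = s') ↔
      Subgroup.map (MonoidHom.snd S S) (X B (l - 1)) = ⊤) ∧
    (Subgroup.map (MonoidHom.snd S S) (X B (l - 1)) = ⊤ ↔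
      Subgroup.map (MonoidHom.fst S S) (Y B (l - 1)) = ⊤) := by
  obtain ⟨n, rfl⟩ : ∃ n : ℕ, l = (n : ℤ) + 1 := ⟨(l - 1).toNat, by omega⟩
  have hX : X B ((n : ℤ) + 1 - 1) = Xnat B n := by
    have h : (n : ℤ) + 1 - 1 = (n : ℤ) := by ring
    rw [h, X, if_neg (by omega), Int.toNat_natCast]
  have hY : Y B ((n : ℤ) + 1 - 1) = Ynat B n := by
    have h : (n : ℤ) + 1 - 1 = (n : ℤ) := by ring
    rw [h, Y, if_neg (by omega), Int.toNat_natCast]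
  rw [hX, hY]
  have hB1' : Subgroup.map (MonoidHom.fst S S) (Subgroup.map sw B) = ⊤ := by
    rw [map_fst_map_sw]; exact hB2
  have hB2' : Subgroup.map (MonoidHom.snd S S) (Subgroup.map sw B) = ⊤ := by
    rw [map_snd_map_sw]; exact hB1
  have hmain := ctrl_iff hB1 hB2 n
  refine ⟨hmain, ?_⟩
  rw [map_fst_Ynat_eq n, ← ctrl_iff hB1' hB2' n, ← hmain]
  constructor
  · exact ctrl_swap n
  · intro h
    have := ctrl_swap n h
    rwa [map_sw_map_sw] at this

end GroupCodes
end

section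
/- For all integers j ≥ 0 and k ≥ 0 one has (X_j ∩ Y_k)⁺ = (X_{j+1} ∩ Y_{k-1})⁻ and (X_{j-1}(X_j ∩ Y_k))⁺ = (X_j(X_{j+1} ∩ Y_{k-1}))⁻ (here Y_{-1} = 1 and X_{-1} = 1). -/
/-!
For `j, k ≥ 0` we have `X_{j+1} = N(X_j)` and `Y_k = P(Y_{k-1})`. For subgroups `A, C ≤ B`,
both `(A ∩ P(C))⁺` and `(N(A) ∩ C)⁻` are `A⁺ ∩ C⁻`, which gives the first identity with
`A = X_j`, `C = Y_{k-1}`. Since `B⁻ = S`, also `N(A)⁻ = A⁺`, so `X_j⁻ = X_{j-1}⁺`; the second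
identity follows because images of joins are joins of images.
-/

open Pointwise

namespace GroupCodes

variable {S : Type*} [Group S]

lemma X_le (B : Subgroup (S × S)) (i : ℤ) : X B i ≤ B := by
  unfold X
  split
  · exact bot_le
  · cases i.toNat <;> exact inf_le_left

lemma Y_le (B : Subgroup (S × S)) (i : ℤ) : Y B i ≤ B := by
  unfold Y
  split
  · exact bot_le
  · cases i.toNat <;> exact inf_le_left

lemma X_eq_N_X_sub_one (B : Subgroup (S × S)) {j : ℤ} (hj : 0 ≤ j) :
    X B j = N B (X B (j - 1)) := by
  obtain ⟨n, rfl⟩ := Int.eq_ofNat_of_zero_le hj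
  cases n with
  | zero => simp [X, Xnat, N]
  | succ n =>
    rw [Nat.cast_succ, add_sub_cancel_right, ← Nat.cast_succ, X_natCast, X_natCast, Xnat, N]

lemma Y_eq_P_Y_sub_one (B : Subgroup (S × S)) {k : ℤ} (hk : 0 ≤ k) :
    Y B k = P B (Y B (k - 1)) := by
  obtain ⟨n, rfl⟩ := Int.eq_ofNat_of_zero_le hk
  cases n with
  | zero => simp [Y, Ynat, P]
  | succ n =>
    rw [Nat.cast_succ, add_sub_cancel_right, ← Nat.cast_succ, Y_natCast, Y_natCast, Ynat, P]

lemma map_snd_inf_P {B A : Subgroup (S × S)} (hA : A ≤ B) (C : Subgroup (S × S)) :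
    (A ⊓ P B C).map (MonoidHom.snd S S) =
      A.map (MonoidHom.snd S S) ⊓ C.map (MonoidHom.fst S S) := by
  ext s
  simp only [P, Subgroup.mem_inf, Subgroup.mem_map, Subgroup.mem_comap]
  constructor
  · rintro ⟨b, ⟨hbA, -, hbC⟩, rfl⟩
    exact ⟨⟨b, hbA, rfl⟩, hbC⟩
  · rintro ⟨⟨b, hbA, rfl⟩, hbC⟩
    exact ⟨b, ⟨hbA, hA hbA, hbC⟩, rfl⟩

lemma map_fst_N_inf {B C : Subgroup (S × S)} (hC : C ≤ B) (A : Subgroup (S × S)) :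
    (N B A ⊓ C).map (MonoidHom.fst S S) =
      A.map (MonoidHom.snd S S) ⊓ C.map (MonoidHom.fst S S) := by
  ext s
  simp only [N, Subgroup.mem_inf, Subgroup.mem_map, Subgroup.mem_comap]
  constructor
  · rintro ⟨c, ⟨⟨-, hcA⟩, hcC⟩, rfl⟩
    exact ⟨hcA, c, hcC, rfl⟩
  · rintro ⟨hcA, c, hcC, rfl⟩
    exact ⟨c, ⟨⟨hC hcC, hcA⟩, hcC⟩, rfl⟩

lemma map_fst_N (B A : Subgroup (S × S)) :
    (N B A).map (MonoidHom.fst S S) =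
      A.map (MonoidHom.snd S S) ⊓ B.map (MonoidHom.fst S S) := by
  rw [← map_fst_N_inf le_rfl, inf_of_le_left]
  exact inf_le_left

theorem plus_eq_minus_shift_general
    (B : Subgroup (S × S))
    (hB1 : Subgroup.map (MonoidHom.fst S S) B = ⊤) :
    ∀ j k : ℤ, 0 ≤ j → 0 ≤ k →
      Subgroup.map (MonoidHom.snd S S) (X B j ⊓ Y B k)
        = Subgroup.map (MonoidHom.fst S S) (X B (j + 1) ⊓ Y B (k - 1)) ∧
      Subgroup.map (MonoidHom.snd S S) (X B (j - 1) ⊔ (X B j ⊓ Y B k))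
        = Subgroup.map (MonoidHom.fst S S) (X B j ⊔ (X B (j + 1) ⊓ Y B (k - 1))) := by
  intro j k hj hk
  have hXj : X B j = N B (X B (j - 1)) := X_eq_N_X_sub_one B hj
  have hXj1 : X B (j + 1) = N B (X B j) := by
    simpa using X_eq_N_X_sub_one B (j := j + 1) (by omega)
  have hYk : Y B k = P B (Y B (k - 1)) := Y_eq_P_Y_sub_one B hk
  have shift : (X B j ⊓ Y B k).map (MonoidHom.snd S S)
      = (X B (j + 1) ⊓ Y B (k - 1)).map (MonoidHom.fst S S) := by
    rw [hYk, hXj1, map_snd_inf_P (X_le B j), map_fst_N_inf (Y_le B (k - 1))]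
  refine ⟨shift, ?_⟩
  rw [Subgroup.map_sup, Subgroup.map_sup, shift, hXj, map_fst_N, hB1, inf_top_eq]

/-- `(X_j ∩ Y_k)⁺ = (X_{j+1} ∩ Y_{k-1})⁻` and
`(X_{j-1}(X_j ∩ Y_k))⁺ = (X_j(X_{j+1} ∩ Y_{k-1}))⁻` for all `j, k ≥ 0`
(`U⁺`, `U⁻` formalized as images under the two projections; products as joins). -/
theorem plus_eq_minus_shift
    (B : Subgroup (S × S))
    (hB1 : Subgroup.map (MonoidHom.fst S S) B = ⊤)
    (hB2 : Subgroup.map (MonoidHom.snd S S) B = ⊤) :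
    ∀ j k : ℤ, 0 ≤ j → 0 ≤ k →
      Subgroup.map (MonoidHom.snd S S) (X B j ⊓ Y B k)
        = Subgroup.map (MonoidHom.fst S S) (X B (j + 1) ⊓ Y B (k - 1)) ∧
      Subgroup.map (MonoidHom.snd S S) (X B (j - 1) ⊔ (X B j ⊓ Y B k))
        = Subgroup.map (MonoidHom.fst S S) (X B j ⊔ (X B (j + 1) ⊓ Y B (k - 1))) :=
  plus_eq_minus_shift_general B hB1

end GroupCodes
end
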